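/- Let n ≥ 2 and m ≥ 1 be integers, and let h̃ : ℝⁿ → ℝ be smooth with support contained in the closed unit ball. Let w(y) = (1−|y|²)^{m−1} (a polynomial on ℝⁿ). If ∫_{ℝⁿ} (Δ^j w)(y) h̃(y) dy = 0 for every integer j with 0 ≤ j ≤ m−1, where Δ^j denotes the j-th power of the Laplace operator on ℝⁿ, then ∫_{ℝⁿ} |y|^{2k} h̃(y) dy = 0 for every integer k with 0 ≤ k ≤ m−1. -/
import Mathlib


open MeasureTheory Metric Real

noncomputable section

/-- Euclidean space `ℝⁿ`. -/
abbrev En (n : ℕ) := EuclideanSpace ℝ (Fin n)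

/-- Normalized (spherical) Bessel function `j_p`, defined for all complex `z`
by the Poisson integral `j_p(z) = c_p ∫_{-1}^1 e^{-izs}(1-s²)^{p-1/2} ds`,
normalized so that `j_p 0 = 1`. -/
noncomputable def jB (p : ℝ) (z : ℂ) : ℂ :=
  (((∫ s in (-1:ℝ)..1, (1 - s^2) ^ (p - 1/2)) : ℝ) : ℂ)⁻¹ *
    ∫ s in (-1:ℝ)..1, Complex.exp (-Complex.I * z * s) * (((1 - s^2) ^ (p - 1/2) : ℝ) : ℂ)

/-- Real-valued normalized Bessel function on the real line. -/
noncomputable def jR (p : ℝ) (x : ℝ) : ℝ := (jB p x).re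

/-- Formal Laplacian of a polynomial on `ℝⁿ`. -/
noncomputable def polyLap (n : ℕ) (p : MvPolynomial (Fin n) ℝ) : MvPolynomial (Fin n) ℝ :=
  ∑ i : Fin n, MvPolynomial.pderiv i (MvPolynomial.pderiv i p)

namespace S13
open Polynomial


def rpoly (n : ℕ) : MvPolynomial (Fin n) ℝ := ∑ i : Fin n, MvPolynomial.X i ^ 2

def Lop (n : ℕ) (g : ℝ[X]) : ℝ[X] :=
  C 4 * X * g.derivative.derivative + C (2*(n:ℝ)) * g.derivative

lemma pderiv_rpoly (n : ℕ) (i : Fin n) :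
    MvPolynomial.pderiv i (rpoly n) = 2 * MvPolynomial.X i := by
  classical
  rw [rpoly, map_sum, Finset.sum_eq_single i]
  · simp [pow_two, Derivation.leibniz, two_mul]
  · intro j _ hj
    simp [pow_two, Derivation.leibniz, MvPolynomial.pderiv_X_of_ne hj]
  · simp

lemma key (n : ℕ) (q : ℝ[X]) (i : Fin n) :
    MvPolynomial.pderiv i (Polynomial.aeval (rpoly n) q)
      = Polynomial.aeval (rpoly n) (C 2 * q.derivative) * MvPolynomial.X i := by
  rw [Derivation.map_aeval, pderiv_rpoly, smul_eq_mul, map_mul, Polynomial.aeval_C]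
  ring_nf
  rfl

lemma polyLap_aeval (n : ℕ) (g : ℝ[X]) :
    polyLap n (Polynomial.aeval (rpoly n) g) = Polynomial.aeval (rpoly n) (Lop n g) := by
  unfold polyLap
  have step : ∀ i : Fin n,
      MvPolynomial.pderiv i (MvPolynomial.pderiv i (Polynomial.aeval (rpoly n) g))
        = Polynomial.aeval (rpoly n) (C 2 * g.derivative)
          + MvPolynomial.X i * (Polynomial.aeval (rpoly n) (C 2 * (C 2 * g.derivative).derivative) * MvPolynomial.X i) := by
    intro i
    rw [key, Derivation.leibniz, MvPolynomial.pderiv_X_self, smul_eq_mul, mul_one, key,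
      smul_eq_mul]
  simp only [step]
  rw [Finset.sum_add_distrib, Finset.sum_const, Finset.card_univ, Fintype.card_fin]
  have h2 : ∑ i : Fin n, MvPolynomial.X i *
      (Polynomial.aeval (rpoly n) (C 2 * (C 2 * g.derivative).derivative) * MvPolynomial.X i)
      = Polynomial.aeval (rpoly n) (C 2 * (C 2 * g.derivative).derivative) * rpoly n := by
    rw [rpoly, Finset.mul_sum]
    exact Finset.sum_congr rfl fun i _ => by ring
  rw [h2, Lop]
  simp only [derivative_C_mul]
  simp only [map_add, map_mul, map_ofNat, Polynomial.aeval_X,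
    Polynomial.aeval_C, map_natCast, nsmul_eq_mul]
  ring

lemma Lop_coeff (n : ℕ) (g : ℝ[X]) (e : ℕ) :
    (Lop n g).coeff e = (4*e*(e+1) + 2*n*(e+1)) * g.coeff (e+1) := by
  rw [Lop, coeff_add, mul_assoc, coeff_C_mul, coeff_C_mul, coeff_derivative]
  cases e with
  | zero => simp [coeff_derivative]
  | succ e' =>
    rw [coeff_X_mul, coeff_derivative, coeff_derivative]
    push_cast
    ring

lemma Lop_natDegree_le (n : ℕ) (g : ℝ[X]) (d : ℕ) (hg : g.natDegree ≤ d + 1) :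
    (Lop n g).natDegree ≤ d := by
  rw [natDegree_le_iff_coeff_eq_zero]
  intro e he
  rw [Lop_coeff, coeff_eq_zero_of_natDegree_lt (lt_of_le_of_lt hg (by omega)), mul_zero]

/-- the iterated polynomials -/
def gp (n m : ℕ) (j : ℕ) : ℝ[X] := (Lop n)^[j] ((1 - X : ℝ[X]) ^ (m - 1))

lemma gp_succ (n m j : ℕ) : gp n m (j+1) = Lop n (gp n m j) := by
  rw [gp, Function.iterate_succ_apply', gp]

lemma gp_spec (n m : ℕ) (hn : 1 ≤ n) (hm : 1 ≤ m) :
    ∀ j : ℕ, j ≤ m - 1 → (gp n m j).natDegree ≤ m - 1 - j ∧ (gp n m j).coeff (m - 1 - j) ≠ 0 := by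
  intro j
  induction j with
  | zero =>
    intro _
    have h1 : (1 - X : ℝ[X]) = C (-1) * (X - C 1) := by
      rw [map_one, map_neg, map_one]; ring
    have h2 : (gp n m 0) = C ((-1:ℝ)^(m-1)) * (X - C 1)^(m-1) := by
      rw [gp, Function.iterate_zero_apply, h1, mul_pow, ← C_pow]
    have hmonic : ((X - C 1 : ℝ[X])^(m-1)).Monic := (monic_X_sub_C 1).pow _
    have hdeg : ((X - C 1 : ℝ[X])^(m-1)).natDegree = m - 1 := by
      rw [(monic_X_sub_C (1:ℝ)).natDegree_pow, natDegree_X_sub_C, mul_one]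
    constructor
    · rw [h2, Nat.sub_zero]
      exact (natDegree_C_mul_le _ _).trans hdeg.le
    · rw [h2, Nat.sub_zero, coeff_C_mul]
      rw [show ((X - C 1 : ℝ[X])^(m-1)).coeff (m-1) = 1 by
        have := hmonic.leadingCoeff
        rwa [leadingCoeff, hdeg] at this]
      rw [mul_one]
      exact pow_ne_zero _ (by norm_num)
  | succ j ih =>
    intro hj
    obtain ⟨hd, hc⟩ := ih (by omega)
    have hrw : m - 1 - j = (m - 1 - (j+1)) + 1 := by omega
    constructor
    · rw [gp_succ]
      exact Lop_natDegree_le n _ _ (by rw [← hrw]; exact hd)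
    · rw [gp_succ, Lop_coeff, ← hrw]
      apply mul_ne_zero _ hc
      have hpos : (0:ℝ) < 4*(m-1-(j+1) : ℕ)*((m-1-(j+1) : ℕ)+1) + 2*n*((m-1-(j+1):ℕ)+1) := by
        have h1 : (1:ℝ) ≤ n := by exact_mod_cast hn
        positivity
      exact ne_of_gt hpos


lemma polyLap_iterate (n j : ℕ) (g : ℝ[X]) :
    (polyLap n)^[j] (Polynomial.aeval (rpoly n) g)
      = Polynomial.aeval (rpoly n) ((Lop n)^[j] g) := by
  induction j with
  | zero => simp
  | succ j ih =>
    rw [Function.iterate_succ_apply', ih, polyLap_aeval, Function.iterate_succ_apply']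

lemma mv_aeval_eq_eval {σ : Type*} (f : σ → ℝ) (p : MvPolynomial σ ℝ) :
    MvPolynomial.aeval f p = MvPolynomial.eval f p := by
  rw [MvPolynomial.aeval_def, Algebra.algebraMap_self]
  rfl

end S13

section
open Polynomial

/-- if `h̃` is smooth, supported in the closed unit ball, and orthogonal to
`Δʲ(1-|y|²)^{m-1}` for all `0 ≤ j ≤ m-1`, then all moments `∫ |y|^{2k} h̃(y) dy` vanish for
`0 ≤ k ≤ m-1`. -/
theorem stmt13 (n : ℕ) (hn : 2 ≤ n) (m : ℕ) (hm : 1 ≤ m) (h : En n → ℝ)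
    (hsm : ContDiff ℝ (⊤ : ℕ∞) h) (hsupp : tsupport h ⊆ closedBall (0 : En n) 1)
    (hyp : ∀ j : ℕ, j ≤ m - 1 →
      ∫ y : En n, MvPolynomial.eval (fun i => y i)
          ((polyLap n)^[j] ((1 - ∑ i : Fin n, MvPolynomial.X i ^ 2) ^ (m - 1))) * h y = 0) :
    ∀ k : ℕ, k ≤ m - 1 → ∫ y : En n, ‖y‖ ^ (2 * k) * h y = 0 := by
  classical
  have hch : HasCompactSupport h :=
    (isCompact_closedBall (0 : En n) 1).of_isClosed_subset (isClosed_tsupport h) hsupp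
  have hcont : Continuous h := hsm.continuous
  have hint : ∀ q : ℝ[X], Integrable (fun y : En n => Polynomial.eval (‖y‖^2) q * h y) := by
    intro q
    apply Continuous.integrable_of_hasCompactSupport
    · exact ((q.continuous).comp (continuous_norm.pow 2)).mul hcont
    · exact hch.mul_left
  have hnorm : ∀ y : En n, ‖y‖^2 = ∑ i, y i ^ 2 := by
    intro y
    rw [EuclideanSpace.norm_eq, Real.sq_sqrt (by positivity)]
    simp [sq_abs]
  -- translate the hypothesis
  have hbase : ((1 : MvPolynomial (Fin n) ℝ) - ∑ i : Fin n, MvPolynomial.X i ^ 2) ^ (m - 1)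
      = Polynomial.aeval (S13.rpoly n) ((1 - Polynomial.X : ℝ[X]) ^ (m - 1)) := by
    rw [map_pow, map_sub, map_one, Polynomial.aeval_X, S13.rpoly]
  have htrans : ∀ (j : ℕ) (y : En n),
      MvPolynomial.eval (fun i => y i)
          ((polyLap n)^[j] ((1 - ∑ i : Fin n, MvPolynomial.X i ^ 2) ^ (m - 1)))
        = Polynomial.eval (‖y‖^2) (S13.gp n m j) := by
    intro j y
    rw [hbase, S13.polyLap_iterate, ← S13.gp]
    rw [← S13.mv_aeval_eq_eval]
    rw [← Polynomial.aeval_algHom_apply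
      (MvPolynomial.aeval (fun i => y i) : MvPolynomial (Fin n) ℝ →ₐ[ℝ] ℝ) (S13.rpoly n)]
    have hr : (MvPolynomial.aeval (fun i => y i) : MvPolynomial (Fin n) ℝ →ₐ[ℝ] ℝ)
        (S13.rpoly n) = ‖y‖^2 := by
      rw [hnorm, S13.rpoly]
      simp
    rw [hr, ← Polynomial.coe_aeval_eq_eval]
  have hI : ∀ j : ℕ, j ≤ m - 1 →
      (∫ y : En n, Polynomial.eval (‖y‖^2) (S13.gp n m j) * h y) = 0 := by
    intro j hj
    rw [← hyp j hj]
    congr 1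
    funext y
    rw [htrans]
  have hIexp : ∀ q : ℝ[X], (∫ y : En n, Polynomial.eval (‖y‖^2) q * h y)
      = ∑ i ∈ Finset.range (q.natDegree + 1),
          q.coeff i * ∫ y : En n, Polynomial.eval (‖y‖^2) ((Polynomial.X : ℝ[X])^i) * h y := by
    intro q
    have hpt : ∀ y : En n, Polynomial.eval (‖y‖^2) q * h y
        = ∑ i ∈ Finset.range (q.natDegree + 1),
            q.coeff i * (Polynomial.eval (‖y‖^2) ((Polynomial.X : ℝ[X])^i) * h y) := by
      intro y
      rw [Polynomial.eval_eq_sum_range, Finset.sum_mul]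
      refine Finset.sum_congr rfl fun i _ => by simp [mul_assoc]
    simp_rw [hpt]
    rw [MeasureTheory.integral_finset_sum]
    · exact Finset.sum_congr rfl fun i _ => MeasureTheory.integral_const_mul _ _
    · intro i _
      exact (hint _).const_mul _
  have main : ∀ k : ℕ, k ≤ m - 1 →
      (∫ y : En n, Polynomial.eval (‖y‖^2) ((Polynomial.X : ℝ[X])^k) * h y) = 0 := by
    intro k
    induction k using Nat.strong_induction_on with
    | _ k IH =>
      intro hk
      obtain ⟨hd, hc⟩ := S13.gp_spec n m (by omega) hm (m-1-k) (by omega)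
      rw [Nat.sub_sub_self hk] at hd hc
      set g := S13.gp n m (m-1-k) with hg
      have hdeg : g.natDegree = k := le_antisymm hd (Polynomial.le_natDegree_of_ne_zero hc)
      have h0 : (∫ y : En n, Polynomial.eval (‖y‖^2) g * h y) = 0 := hI _ (by omega)
      rw [hIexp g, hdeg, Finset.sum_range_succ] at h0
      have hz : ∑ i ∈ Finset.range k,
          g.coeff i * (∫ y : En n, Polynomial.eval (‖y‖^2) ((Polynomial.X : ℝ[X])^i) * h y) = 0 := by
        refine Finset.sum_eq_zero fun i hi => ?_
        have hik := Finset.mem_range.mp hi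
        rw [IH i hik (by omega), mul_zero]
      rw [hz, zero_add] at h0
      exact (mul_eq_zero.mp h0).resolve_left hc
  intro k hk
  have := main k hk
  simpa [pow_mul] using this

end
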